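/- If (k+1)·f^{−1/(k+a)} δ_{ij} + (k+a)·∇_i∇_j(f^{−1/(k+a)}) is positive definite on S^{n−1} (with smallest eigenvalue ≥ λ > 0), f is smooth and positive, and −a ≤ s φ′(s)/φ(s) ≤ −1 for all s > 0, then along any direction τ one has (k − φ′h/φ) − (f^{−1})_τ² f² · (k − φ′h/φ − 1)/(k − φ′h/φ) + (f^{−1})_{ττ} f ≥ k + 1 + (k+a) f^{1/(k+a)} (f^{−1/(k+a)})_{ττ} = f^{1/(k+a)}[(k+1) f^{−1/(k+a)} + (k+a)(f^{−1/(k+a)})_{ττ}] ≥ c_f > 0, where c_f depends only on f, a, k and λ. -/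

import Mathlib

/-!
Write `u = f⁻¹` and `p = 1/(k+a)`. Since `f^(-p) = u^p`, the chain rule gives
`(k+a) f^p (f^(-p))'' = f u'' - (1 - p) f² u'²`. With `m = k - r ∈ [k+1, k+a]` and
`X = f² u'² ≥ 0`, the first inequality becomes `m - X (1 - 1/m) ≥ k + 1 - X (1 - 1/(k+a))`,
which holds term by term because `m ≥ k + 1` and `1/m ≥ 1/(k+a)`. The rest follows from
`f^p f^(-p) = 1` and `f^p ≥ fmin^p`.
-/

open Real

theorem rpow_neg_mul_deriv_deriv_rpow {u : ℝ → ℝ} {x : ℝ} (p : ℝ) (hu : Differentiable ℝ u)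
    (hu' : DifferentiableAt ℝ (deriv u) x) (hpos : ∀ s, 0 < u s) :
    u x ^ (-p) * deriv (deriv fun s => u s ^ p) x
      = p * (deriv (deriv u) x / u x + (p - 1) * (deriv u x / u x) ^ 2) := by
  have hderiv : deriv (fun s => u s ^ p) = fun s => deriv u s * p * u s ^ (p - 1) :=
    funext fun s => deriv_rpow_const (hu s) (Or.inl (hpos s).ne')
  have hx := hpos x
  have hderiv2 : HasDerivAt (fun s => deriv u s * p * u s ^ (p - 1))
      (deriv (deriv u) x * p * u x ^ (p - 1)
        + deriv u x * p * (deriv u x * (p - 1) * u x ^ (p - 1 - 1))) x :=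
    (hu'.hasDerivAt.mul_const p).mul ((hu x).hasDerivAt.rpow_const (Or.inl hx.ne'))
  rw [hderiv, hderiv2.deriv]
  have e1 : u x ^ (-p) * u x ^ (p - 1) = (u x)⁻¹ := by
    rw [← rpow_add hx, show -p + (p - 1) = -1 by ring, rpow_neg_one]
  have e2 : u x ^ (-p) * u x ^ (p - 1 - 1) = (u x ^ 2)⁻¹ := by
    rw [← rpow_add hx, show -p + (p - 1 - 1) = -2 by ring, rpow_neg hx.le]
    norm_cast
  linear_combination (deriv (deriv u) x * p) * e1 + (deriv u x ^ 2 * p * (p - 1)) * e2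

theorem mul_rpow_mul_deriv_deriv_rpow_neg {f : ℝ → ℝ} {c : ℝ} (x : ℝ) (hc : c ≠ 0)
    (hf : ContDiff ℝ 2 f) (hpos : ∀ s, 0 < f s) :
    c * f x ^ (1 / c) * deriv (deriv fun s => f s ^ (-(1 / c))) x
      = f x * deriv (deriv fun s => (f s)⁻¹) x
        - (c - 1) / c * f x ^ 2 * deriv (fun s => (f s)⁻¹) x ^ 2 := by
  have hinv : ∀ s (y : ℝ), f s ^ (-y) = (f s)⁻¹ ^ y := fun s y => by
    rw [rpow_neg (hpos s).le, inv_rpow (hpos s).le]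
  have hu : ContDiff ℝ 2 fun s => (f s)⁻¹ := hf.inv fun s => (hpos s).ne'
  have key := rpow_neg_mul_deriv_deriv_rpow (x := x) (1 / c) (hu.differentiable two_ne_zero)
    hu.differentiable_deriv_two.differentiableAt fun s => inv_pos.2 (hpos s)
  rw [← neg_neg (1 / c), hinv x (-(1 / c)), neg_neg]
  simp only [hinv]
  rw [mul_assoc, key]
  have hfx := hpos x
  field_simp
  ring

theorem add_one_sub_mul_le_sub_mul_div {k c m X : ℝ} (hk : 0 ≤ k) (hkm : k + 1 ≤ m)
    (hmc : m ≤ c) (hX : 0 ≤ X) :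
    k + 1 - (c - 1) / c * X ≤ m - X * ((m - 1) / m) := by
  have hm : 0 < m := by linarith
  have hc : 0 < c := hm.trans_le hmc
  have hinv : 1 / c ≤ 1 / m := one_div_le_one_div_of_le hm hmc
  have hc' : (c - 1) / c = 1 - 1 / c := by field_simp
  have hm' : (m - 1) / m = 1 - 1 / m := by field_simp
  rw [hc', hm']
  nlinarith [mul_le_mul_of_nonneg_left hinv hX]

theorem convexity_condition_lower_bound_general (k : ℕ) (a : ℝ)
    (f : ℝ → ℝ) (hfsm : ContDiff ℝ 2 f)
    (fmin : ℝ) (hfmin : 0 < fmin) (hf : ∀ τ, fmin ≤ f τ)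
    (lam : ℝ) (hlam : 0 < lam)
    (hconv : ∀ τ : ℝ, lam ≤ ((k : ℝ) + 1) * (f τ) ^ (-(1 / ((k : ℝ) + a)))
      + ((k : ℝ) + a) * deriv (deriv (fun s => (f s) ^ (-(1 / ((k : ℝ) + a))))) τ)
    (r : ℝ) (hr₁ : -a ≤ r) (hr₂ : r ≤ -1)
    (τ₀ : ℝ) :
    (((k : ℝ) - r)
        - (deriv (fun s => (f s)⁻¹) τ₀) ^ 2 * (f τ₀) ^ 2 *
            (((k : ℝ) - r - 1) / ((k : ℝ) - r))
        + deriv (deriv (fun s => (f s)⁻¹)) τ₀ * f τ₀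
      ≥ (k : ℝ) + 1 + ((k : ℝ) + a) * (f τ₀) ^ (1 / ((k : ℝ) + a)) *
          deriv (deriv (fun s => (f s) ^ (-(1 / ((k : ℝ) + a))))) τ₀) ∧
    ((k : ℝ) + 1 + ((k : ℝ) + a) * (f τ₀) ^ (1 / ((k : ℝ) + a)) *
          deriv (deriv (fun s => (f s) ^ (-(1 / ((k : ℝ) + a))))) τ₀
      = (f τ₀) ^ (1 / ((k : ℝ) + a)) *
          (((k : ℝ) + 1) * (f τ₀) ^ (-(1 / ((k : ℝ) + a)))
            + ((k : ℝ) + a) * deriv (deriv (fun s => (f s) ^ (-(1 / ((k : ℝ) + a))))) τ₀)) ∧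
    ((f τ₀) ^ (1 / ((k : ℝ) + a)) *
          (((k : ℝ) + 1) * (f τ₀) ^ (-(1 / ((k : ℝ) + a)))
            + ((k : ℝ) + a) * deriv (deriv (fun s => (f s) ^ (-(1 / ((k : ℝ) + a))))) τ₀)
      ≥ fmin ^ (1 / ((k : ℝ) + a)) * lam) ∧
    0 < fmin ^ (1 / ((k : ℝ) + a)) * lam := by
  have hpos : ∀ s, 0 < f s := fun s => hfmin.trans_le (hf s)
  have hk : (0 : ℝ) ≤ k := k.cast_nonneg
  have hca : 0 < (k : ℝ) + a := by linarith
  have hchain := mul_rpow_mul_deriv_deriv_rpow_neg τ₀ hca.ne' hfsm hpos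
  have hcancel : f τ₀ ^ (1 / ((k : ℝ) + a)) * f τ₀ ^ (-(1 / ((k : ℝ) + a))) = 1 := by
    rw [rpow_neg (hpos τ₀).le, mul_inv_cancel₀ (rpow_pos_of_pos (hpos τ₀) _).ne']
  refine ⟨?_, by linear_combination (-((k : ℝ) + 1)) * hcancel, ?_,
    mul_pos (rpow_pos_of_pos hfmin _) hlam⟩
  · have hbound := add_one_sub_mul_le_sub_mul_div hk (by linarith : (k : ℝ) + 1 ≤ k - r)
      (by linarith : (k : ℝ) - r ≤ k + a)
      (by positivity : 0 ≤ deriv (fun s => (f s)⁻¹) τ₀ ^ 2 * f τ₀ ^ 2)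
    rw [hchain]
    linarith
  · exact mul_le_mul (rpow_le_rpow hfmin.le (hf τ₀) (one_div_pos.2 hca).le) (hconv τ₀) hlam.le
      (rpow_pos_of_pos (hpos τ₀) _).le

/-- the convexity condition on `f` gives a uniform positive lower
bound in the curvature estimate. Along a unit-speed great circle parametrized by
`τ` (subscripts denote derivatives in `τ`), suppose `f > 0` is smooth with
`f ≥ f_min > 0`, that the positivity condition
`(k+1) f^{−1/(k+a)} + (k+a)(f^{−1/(k+a)})_{ττ} ≥ λ > 0` holds, and that
`r := φ′h/φ ∈ [−a, −1]` with `a ≥ 1`, `k ≥ 1`. Then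
`(k − r) − (f⁻¹)_τ² f² (k − r − 1)/(k − r) + (f⁻¹)_{ττ} f
  ≥ k + 1 + (k+a) f^{1/(k+a)} (f^{−1/(k+a)})_{ττ}
  = f^{1/(k+a)}·[(k+1) f^{−1/(k+a)} + (k+a)(f^{−1/(k+a)})_{ττ}]
  ≥ c_f := f_min^{1/(k+a)}·λ > 0`. -/
theorem convexity_condition_lower_bound (k : ℕ) (hk : 1 ≤ k) (a : ℝ) (ha : 1 ≤ a)
    (f : ℝ → ℝ) (hfsm : ContDiff ℝ 2 f)
    (fmin : ℝ) (hfmin : 0 < fmin) (hf : ∀ τ, fmin ≤ f τ)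
    (lam : ℝ) (hlam : 0 < lam)
    (hconv : ∀ τ : ℝ, lam ≤ ((k : ℝ) + 1) * (f τ) ^ (-(1 / ((k : ℝ) + a)))
      + ((k : ℝ) + a) * deriv (deriv (fun s => (f s) ^ (-(1 / ((k : ℝ) + a))))) τ)
    (r : ℝ) (hr₁ : -a ≤ r) (hr₂ : r ≤ -1)
    (τ₀ : ℝ) :
    (((k : ℝ) - r)
        - (deriv (fun s => (f s)⁻¹) τ₀) ^ 2 * (f τ₀) ^ 2 *
            (((k : ℝ) - r - 1) / ((k : ℝ) - r))
        + deriv (deriv (fun s => (f s)⁻¹)) τ₀ * f τ₀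
      ≥ (k : ℝ) + 1 + ((k : ℝ) + a) * (f τ₀) ^ (1 / ((k : ℝ) + a)) *
          deriv (deriv (fun s => (f s) ^ (-(1 / ((k : ℝ) + a))))) τ₀) ∧
    ((k : ℝ) + 1 + ((k : ℝ) + a) * (f τ₀) ^ (1 / ((k : ℝ) + a)) *
          deriv (deriv (fun s => (f s) ^ (-(1 / ((k : ℝ) + a))))) τ₀
      = (f τ₀) ^ (1 / ((k : ℝ) + a)) *
          (((k : ℝ) + 1) * (f τ₀) ^ (-(1 / ((k : ℝ) + a)))
            + ((k : ℝ) + a) * deriv (deriv (fun s => (f s) ^ (-(1 / ((k : ℝ) + a))))) τ₀)) ∧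
    ((f τ₀) ^ (1 / ((k : ℝ) + a)) *
          (((k : ℝ) + 1) * (f τ₀) ^ (-(1 / ((k : ℝ) + a)))
            + ((k : ℝ) + a) * deriv (deriv (fun s => (f s) ^ (-(1 / ((k : ℝ) + a))))) τ₀)
      ≥ fmin ^ (1 / ((k : ℝ) + a)) * lam) ∧
    0 < fmin ^ (1 / ((k : ℝ) + a)) * lam :=
  convexity_condition_lower_bound_general k a f hfsm fmin hfmin hf lam hlam hconv r hr₁ hr₂ τ₀
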